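/- arXiv:1602.02094 — 3 statements merged into one kernel-verified Lean document; each statement's English description precedes it below -/
import Mathlib

section
/- Let η = 2^{−k} for some k ≥ 1. Then the union of the open Euclidean balls B(x, sep(η)) over x ∈ G_η covers the unit sphere S^n ⊂ ℝ^{n+1}, where sep(η) := η√(n+1). -/
open Function Metric Filter
open scoped ENNReal Real

noncomputable section

/-- The sup norm ‖·‖_∞ on ℝ^k (viewed as Euclidean space). -/
def supNorm {k : ℕ} (y : EuclideanSpace ℝ (Fin k)) : ℝ :=
  ‖(WithLp.equiv 2 (Fin k → ℝ)) y‖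

/-- Radial projection onto the unit sphere, φ(y) = y/‖y‖. -/
def sphProj {k : ℕ} (y : EuclideanSpace ℝ (Fin k)) : EuclideanSpace ℝ (Fin k) :=
  ‖y‖⁻¹ • y

/-- The angular distance d_S(x₁,x₂) = arccos⟨x₁,x₂⟩ on the unit sphere. -/
def angDist {k : ℕ} (x₁ x₂ : EuclideanSpace ℝ (Fin k)) : ℝ :=
  Real.arccos (inner ℝ x₁ x₂)

/-- The grid U_η on the boundary of the unit cube: points with ‖y‖_∞ = 1 all of whose
coordinates are of the form i·2^{−k} with i ∈ {−2^k,…,2^k}. -/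
def gridCube (n k : ℕ) : Set (EuclideanSpace ℝ (Fin (n + 1))) :=
  {y | supNorm y = 1 ∧ ∀ j : Fin (n + 1), ∃ i : ℤ, |i| ≤ 2 ^ k ∧ y j = (i : ℝ) / 2 ^ k}

/-- The grid G_η = φ(U_η) on the unit sphere. -/
def gridSphere (n k : ℕ) : Set (EuclideanSpace ℝ (Fin (n + 1))) :=
  sphProj '' gridCube n k

/-! Rescale a point `z` of the sphere to `y = z / ‖z‖_∞` on the boundary of the cube and round
every coordinate of `y` to the nearest multiple of `η`. A coordinate equal to `±1` is unchanged,
so the rounded point `u` lies in `U_η`, and `‖y - u‖ ≤ η √(n+1) / 2`. Both `y` and `u` have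
Euclidean norm at least `1`, where radial projection onto the sphere is `1`-Lipschitz; hence
`‖z - φ u‖ ≤ η √(n+1) / 2`. -/

-- On `1 ≤ ‖x‖`, `normalize` is the nearest-point projection onto the closed unit ball.
theorem norm_normalize_sub_normalize_le {E : Type*} [NormedAddCommGroup E]
    [InnerProductSpace ℝ E] {a b : E} (ha : 1 ≤ ‖a‖) (hb : 1 ≤ ‖b‖) :
    ‖NormedSpace.normalize a - NormedSpace.normalize b‖ ≤ ‖a - b‖ := by
  have ha0 : 0 < ‖a‖ := one_pos.trans_le ha
  have hb0 : 0 < ‖b‖ := one_pos.trans_le hb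
  have hinner : inner ℝ (NormedSpace.normalize a) (NormedSpace.normalize b) =
      (‖a‖ * ‖b‖)⁻¹ * inner ℝ a b := by
    simp only [NormedSpace.normalize, real_inner_smul_left, real_inner_smul_right]; field_simp
  have hcs : inner ℝ a b ≤ ‖a‖ * ‖b‖ := real_inner_le_norm a b
  have hab : (‖a‖ * ‖b‖)⁻¹ * (‖a‖ * ‖b‖) = 1 := inv_mul_cancel₀ (by positivity)
  have hinv : (‖a‖ * ‖b‖)⁻¹ ≤ 1 := inv_le_one_of_one_le₀ (one_le_mul_of_one_le_of_one_le ha hb)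
  refine pow_le_pow_iff_left₀ (norm_nonneg _) (norm_nonneg _) two_ne_zero |>.mp ?_
  rw [norm_sub_sq_real, norm_sub_sq_real, hinner,
    NormedSpace.norm_normalize_eq_one_iff.mpr (norm_pos_iff.mp ha0),
    NormedSpace.norm_normalize_eq_one_iff.mpr (norm_pos_iff.mp hb0)]
  nlinarith [mul_le_mul_of_nonneg_left hcs (sub_nonneg.mpr hinv), sq_nonneg (‖a‖ - ‖b‖)]

theorem abs_round_le_of_abs_le {x : ℝ} {N : ℤ} (h : |x| ≤ N) : |round x| ≤ N := by
  have : (|round x| : ℝ) < N + 1 := by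
    calc (|round x| : ℝ) = |x - (x - round x)| := by ring_nf
      _ ≤ |x| + |x - round x| := abs_sub _ _
      _ ≤ N + 1 / 2 := add_le_add h (abs_sub_round x)
      _ < N + 1 := by linarith
  exact Int.lt_add_one_iff.mp (by exact_mod_cast this)

section SupNorm

variable {m : ℕ}

theorem abs_apply_le_supNorm (y : EuclideanSpace ℝ (Fin m)) (i : Fin m) : |y i| ≤ supNorm y :=
  norm_le_pi_norm (WithLp.equiv 2 _ y) i

theorem supNorm_le_norm (y : EuclideanSpace ℝ (Fin m)) : supNorm y ≤ ‖y‖ :=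
  (pi_norm_le_iff_of_nonneg (norm_nonneg y)).mpr fun i => PiLp.norm_apply_le y i

theorem exists_abs_apply_eq_supNorm (y : EuclideanSpace ℝ (Fin (m + 1))) :
    ∃ j, |y j| = supNorm y := by
  obtain ⟨j, -, hj⟩ := Finset.exists_mem_eq_sup Finset.univ Finset.univ_nonempty
    fun i => ‖y i‖₊
  refine ⟨j, ?_⟩
  rw [supNorm, ← coe_nnnorm, Pi.nnnorm_def]
  exact congrArg ((↑) : NNReal → ℝ) hj.symm

theorem supNorm_smul (c : ℝ) (y : EuclideanSpace ℝ (Fin m)) :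
    supNorm (c • y) = |c| * supNorm y :=
  norm_smul c (WithLp.equiv 2 _ y)

theorem supNorm_pos {y : EuclideanSpace ℝ (Fin m)} (hy : y ≠ 0) : 0 < supNorm y :=
  norm_pos_iff.mpr fun h => hy ((WithLp.equiv 2 _).injective (h.trans (by simp)))

theorem norm_le_sqrt_mul_of_abs_apply_le {w : EuclideanSpace ℝ (Fin (m + 1))} {c : ℝ}
    (h : ∀ i, |w i| ≤ c) : ‖w‖ ≤ √(m + 1) * c := by
  have hc : 0 ≤ c := (abs_nonneg _).trans (h 0)
  rw [EuclideanSpace.norm_eq, ← Real.sqrt_sq hc, ← Real.sqrt_mul (by positivity)]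
  refine Real.sqrt_le_sqrt ?_
  calc ∑ i, ‖w i‖ ^ 2 ≤ ∑ _i : Fin (m + 1), c ^ 2 := Finset.sum_le_sum fun i _ =>
        pow_le_pow_left₀ (norm_nonneg _) (h i) 2
    _ = (m + 1) * c ^ 2 := by simp

end SupNorm

def roundToGrid {m : ℕ} (k : ℕ) (y : EuclideanSpace ℝ (Fin m)) : EuclideanSpace ℝ (Fin m) :=
  WithLp.toLp 2 fun i => (round (y i * 2 ^ k) : ℝ) / 2 ^ k

section RoundToGrid

variable {m : ℕ} (k : ℕ) (y : EuclideanSpace ℝ (Fin m))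

theorem roundToGrid_apply (i : Fin m) : roundToGrid k y i = (round (y i * 2 ^ k) : ℝ) / 2 ^ k :=
  rfl

theorem abs_sub_roundToGrid_apply_le (i : Fin m) :
    |y i - roundToGrid k y i| ≤ ((2 : ℝ) ^ k)⁻¹ / 2 := by
  have h2k : (0 : ℝ) < 2 ^ k := by positivity
  have : y i - roundToGrid k y i = (y i * 2 ^ k - round (y i * 2 ^ k)) / 2 ^ k := by
    rw [roundToGrid_apply]; field_simp
  rw [this, abs_div, abs_of_pos h2k, div_le_iff₀ h2k]
  calc _ ≤ 1 / 2 := abs_sub_round _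
    _ = _ := by field_simp

theorem abs_round_apply_le {i : Fin m} (hy : |y i| ≤ 1) : |round (y i * 2 ^ k)| ≤ 2 ^ k :=
  abs_round_le_of_abs_le <| by
    rw [abs_mul, abs_of_pos (by positivity : (0 : ℝ) < 2 ^ k)]
    exact_mod_cast mul_le_of_le_one_left (by positivity) hy

theorem roundToGrid_apply_of_abs_eq_one {j : Fin m} (hy : |y j| = 1) :
    roundToGrid k y j = y j := by
  have h2k : (2 : ℝ) ^ k ≠ 0 := by positivity
  rcases abs_eq zero_le_one |>.mp hy with h | h <;> rw [roundToGrid_apply, h]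
  · rw [one_mul, ← Int.cast_two, ← Int.cast_pow, round_intCast]
    push_cast; exact div_self h2k
  · rw [neg_one_mul, ← Int.cast_two, ← Int.cast_pow, ← Int.cast_neg, round_intCast,
      Int.cast_neg, neg_div]
    push_cast; rw [div_self h2k]

end RoundToGrid

theorem roundToGrid_mem_gridCube {n : ℕ} (k : ℕ) {y : EuclideanSpace ℝ (Fin (n + 1))}
    (hy : supNorm y = 1) : roundToGrid k y ∈ gridCube n k := by
  have hle : ∀ i, |y i| ≤ 1 := fun i => hy ▸ abs_apply_le_supNorm y i
  obtain ⟨j, hj⟩ := exists_abs_apply_eq_supNorm y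
  refine ⟨le_antisymm ?_ ?_, fun i => ⟨_, abs_round_apply_le k y (hle i), rfl⟩⟩
  · refine (pi_norm_le_iff_of_nonneg zero_le_one).mpr fun i => ?_
    change |roundToGrid k y i| ≤ 1
    have h2k : (0 : ℝ) < 2 ^ k := by positivity
    rw [roundToGrid_apply, abs_div, abs_of_pos h2k, div_le_one h2k, ← Int.cast_abs]
    exact_mod_cast abs_round_apply_le k y (hle i)
  · calc 1 = |roundToGrid k y j| := by
          rw [roundToGrid_apply_of_abs_eq_one k y (hj.trans hy), hj, hy]
      _ ≤ supNorm (roundToGrid k y) := abs_apply_le_supNorm _ j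

theorem normalize_inv_supNorm_smul {m : ℕ} {z : EuclideanSpace ℝ (Fin m)} (hz : ‖z‖ = 1) :
    NormedSpace.normalize ((supNorm z)⁻¹ • z) = z := by
  have hz0 : z ≠ 0 := norm_ne_zero_iff.mp (hz ▸ one_ne_zero)
  rw [NormedSpace.normalize_smul_of_pos (inv_pos.mpr (supNorm_pos hz0)),
    NormedSpace.normalize_eq_self_of_norm_eq_one hz]

theorem supNorm_inv_supNorm_smul {m : ℕ} {z : EuclideanSpace ℝ (Fin m)} (hz : z ≠ 0) :
    supNorm ((supNorm z)⁻¹ • z) = 1 := by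
  rw [supNorm_smul, abs_inv, abs_of_pos (supNorm_pos hz), inv_mul_cancel₀ (supNorm_pos hz).ne']

theorem statement8_general {n k : ℕ} (η : ℝ) (hη : η = ((2 : ℝ) ^ k)⁻¹) :
    Metric.sphere (0 : EuclideanSpace ℝ (Fin (n + 1))) 1 ⊆
      ⋃ x ∈ gridSphere n k, Metric.ball x (η * Real.sqrt (n + 1)) := by
  intro z hz
  have hz1 : ‖z‖ = 1 := mem_sphere_zero_iff_norm.mp hz
  set y := (supNorm z)⁻¹ • z
  have hy : supNorm y = 1 := supNorm_inv_supNorm_smul (norm_ne_zero_iff.mp (hz1 ▸ one_ne_zero))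
  set u := roundToGrid k y
  have hu : u ∈ gridCube n k := roundToGrid_mem_gridCube k hy
  refine Set.mem_biUnion ⟨u, hu, rfl⟩ ?_
  have hη0 : 0 < η := hη ▸ by positivity
  rw [mem_ball, dist_eq_norm, ← normalize_inv_supNorm_smul hz1]
  calc ‖NormedSpace.normalize y - NormedSpace.normalize u‖ ≤ ‖y - u‖ :=
        norm_normalize_sub_normalize_le (hy ▸ supNorm_le_norm y) (hu.1 ▸ supNorm_le_norm u)
    _ ≤ √(n + 1) * (η / 2) := norm_le_sqrt_mul_of_abs_apply_le fun i =>
        hη ▸ abs_sub_roundToGrid_apply_le k y i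
    _ < η * √(n + 1) := by nlinarith [Real.sqrt_pos.mpr (by positivity : (0 : ℝ) < n + 1)]

/-- For η = 2^{−k} with k ≥ 1, the union of the balls B(x, sep(η)) for
x ∈ G_η, where sep(η) := η√(n+1), covers the unit sphere Sⁿ. -/
theorem statement8 {n k : ℕ} (hk : 1 ≤ k) (η : ℝ) (hη : η = ((2 : ℝ) ^ k)⁻¹) :
    Metric.sphere (0 : EuclideanSpace ℝ (Fin (n + 1))) 1 ⊆
      ⋃ x ∈ gridSphere n k, Metric.ball x (η * Real.sqrt (n + 1)) :=
  statement8_general η hη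
end
end

section
/- Let f : ℝ^{n+1} → ℝ^m be analytic and p ∈ ℝ^{n+1} with Df(p) surjective, and set H₂ := (ker Df(p))^⊥. Then for every z ∈ ℝ^{n+1} with ‖z‖·γ(f,p) < 1 − √2/2, the restriction Df(p+z)|_{H₂} : H₂ → ℝ^m is invertible (a linear isomorphism). -/
/-!
Put `A = Df(p)` and `g = A† ∘ f`. Then `Dg(p) = A†A` is the orthogonal projection onto `H₂`,
and the Taylor coefficients of `g` at `p` satisfy `‖D^k g(p)/k!‖ ≤ γ^(k-1)` with `γ = γ(f,p)`.
Real analyticity on the whole space and the identity theorem let the Taylor series of `g`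
represent it on its full ball of convergence, which has radius at least `1/γ`. Differentiating
it termwise gives, for `u = ‖z‖γ < 1`,
`‖Dg(p+z) - Dg(p)‖ ≤ ∑_{k≥1} (k+1) u^k = (1-u)⁻² - 1`, which is `< 1` when `u < 1 - √2/2`.
So `A† Df(p+z)` is within distance `< 1` of the identity on `H₂`, hence `Df(p+z)` is injective
on `H₂`, and bijective since `dim H₂ = m`.
-/

open Function Metric Filter
open scoped ENNReal

noncomputable section

/-- Moore–Penrose inverse A† = Aᵀ (A Aᵀ)⁻¹ of a (surjective) continuous linear map
between real inner product spaces. -/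
def pinv {E F : Type*} [NormedAddCommGroup E] [InnerProductSpace ℝ E] [CompleteSpace E]
    [NormedAddCommGroup F] [InnerProductSpace ℝ F] [CompleteSpace F]
    (A : E →L[ℝ] F) : F →L[ℝ] E :=
  (ContinuousLinearMap.adjoint A).comp (Ring.inverse (A.comp (ContinuousLinearMap.adjoint A)))

/-- The k-th term ‖Df(x)† ∘ (D^k f(x)/k!)‖^(1/(k−1)) in the definition of Smale's γ. -/
def gammaSeq {E F : Type*} [NormedAddCommGroup E] [InnerProductSpace ℝ E] [CompleteSpace E]
    [NormedAddCommGroup F] [InnerProductSpace ℝ F] [CompleteSpace F]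
    (f : E → F) (x : E) (k : ℕ) : ℝ :=
  (‖(pinv (fderiv ℝ f x)).compContinuousMultilinearMap (iteratedFDeriv ℝ k f x)‖
    / (k.factorial : ℝ)) ^ ((1 : ℝ) / ((k : ℝ) - 1))

/-- Smale's γ(f,x) = sup_{k≥2} ‖Df(x)† ∘ (D^k f(x)/k!)‖^(1/(k−1)), as an extended real. -/
def gammaE {E F : Type*} [NormedAddCommGroup E] [InnerProductSpace ℝ E] [CompleteSpace E]
    [NormedAddCommGroup F] [InnerProductSpace ℝ F] [CompleteSpace F]
    (f : E → F) (x : E) : ℝ≥0∞ :=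
  ⨆ (k : ℕ) (_ : 2 ≤ k), ENNReal.ofReal (gammaSeq f x k)

/-- Smale's β(f,x) = ‖Df(x)† f(x)‖. -/
def betaR {E F : Type*} [NormedAddCommGroup E] [InnerProductSpace ℝ E] [CompleteSpace E]
    [NormedAddCommGroup F] [InnerProductSpace ℝ F] [CompleteSpace F]
    (f : E → F) (x : E) : ℝ :=
  ‖pinv (fderiv ℝ f x) (f x)‖

open scoped NNReal Topology Nat

section PseudoInverse

variable {E F : Type*} [NormedAddCommGroup E] [InnerProductSpace ℝ E] [FiniteDimensional ℝ E]
  [NormedAddCommGroup F] [InnerProductSpace ℝ F] [FiniteDimensional ℝ F]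

open ContinuousLinearMap

theorem comp_pinv_of_surjective {A : E →L[ℝ] F} (hA : Surjective A) :
    A ∘L pinv A = ContinuousLinearMap.id ℝ F := by
  have hker : (A ∘L adjoint A).ker = ⊥ := by
    rw [ker_self_comp_adjoint, ← orthogonal_range, LinearMap.range_eq_top.mpr hA,
      Submodule.top_orthogonal_eq_bot]
  have hunit : IsUnit (A ∘L adjoint A) := by
    rwa [isUnit_iff_isUnit_toLinearMap, LinearMap.isUnit_iff_ker_eq_bot]
  change (A ∘L adjoint A) * Ring.inverse (A ∘L adjoint A) = 1
  exact Ring.mul_inverse_cancel _ hunit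

theorem pinv_apply_apply_of_mem_orthogonal_ker {A : E →L[ℝ] F} (hA : Surjective A) {v : E}
    (hv : v ∈ (LinearMap.ker A.toLinearMap)ᗮ) : pinv A (A v) = v := by
  have hker : pinv A (A v) - v ∈ LinearMap.ker A.toLinearMap := by
    simp [← comp_apply A (pinv A), comp_pinv_of_surjective hA]
  -- `pinv A` takes values in the range of `adjoint A`, which is orthogonal to `ker A`.
  have hrange : pinv A (A v) ∈ (LinearMap.ker A.toLinearMap)ᗮ := by
    refine (Submodule.mem_orthogonal _ _).mpr fun u (hu : A u = 0) => ?_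
    rw [pinv, ContinuousLinearMap.comp_apply, adjoint_inner_right, hu, inner_zero_left]
  have hbot := (Submodule.orthogonal_disjoint _).le_bot ⟨hker, sub_mem hrange hv⟩
  exact sub_eq_zero.mp hbot

omit [FiniteDimensional ℝ F] in
theorem finrank_orthogonal_ker_of_surjective {A : E →L[ℝ] F} (hA : Surjective A) :
    Module.finrank ℝ (LinearMap.ker A.toLinearMap)ᗮ = Module.finrank ℝ F := by
  have h1 := (LinearMap.ker A.toLinearMap).finrank_add_finrank_orthogonal
  have h2 := LinearMap.finrank_range_add_finrank_ker A.toLinearMap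
  rw [LinearMap.range_eq_top.mpr hA, finrank_top] at h2
  omega

theorem bijective_restrict_orthogonal_ker_of_norm_pinv_comp_sub_lt_one {A B : E →L[ℝ] F}
    (hA : Surjective A) (hB : ‖pinv A ∘L B - pinv A ∘L A‖ < 1) :
    Bijective fun v : (LinearMap.ker A.toLinearMap)ᗮ => B v := by
  have hinj : Injective fun v : (LinearMap.ker A.toLinearMap)ᗮ => B v := by
    intro v w hvw
    have hd : (v - w : E) ∈ (LinearMap.ker A.toLinearMap)ᗮ := sub_mem v.2 w.2
    have hBd : B (v - w) = 0 := by rw [map_sub]; exact sub_eq_zero.mpr hvw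
    have hT : (pinv A ∘L B - pinv A ∘L A) (v - w) = -(v - w) := by
      rw [sub_apply, ContinuousLinearMap.comp_apply, ContinuousLinearMap.comp_apply, hBd, map_zero,
        pinv_apply_apply_of_mem_orthogonal_ker hA hd, zero_sub]
    have hle : ‖(v - w : E)‖ ≤ ‖pinv A ∘L B - pinv A ∘L A‖ * ‖(v - w : E)‖ := by
      simpa only [hT, norm_neg] using (pinv A ∘L B - pinv A ∘L A).le_opNorm (v - w)
    have hzero : ‖(v - w : E)‖ = 0 := by nlinarith [norm_nonneg (v - w : E)]
    exact Subtype.ext (sub_eq_zero.mp (norm_eq_zero.mp hzero))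
  exact ⟨hinj, (LinearMap.injective_iff_surjective_of_finrank_eq_finrank
    (f := B.toLinearMap.domRestrict _) (finrank_orthogonal_ker_of_surjective hA)).mp hinj⟩

end PseudoInverse

namespace FormalMultilinearSeries

variable {𝕜 : Type*} [NontriviallyNormedField 𝕜] {E F : Type*} [NormedAddCommGroup E]
  [NormedSpace 𝕜 E] [NormedAddCommGroup F] [NormedSpace 𝕜 F]

theorem norm_derivSeries_le (p : FormalMultilinearSeries 𝕜 E F) (n : ℕ) :
    ‖p.derivSeries n‖ ≤ (n + 1) * ‖p (n + 1)‖ := by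
  have hcurry : ‖p.derivSeries n‖ ≤ ‖p.changeOriginSeries 1 n‖ :=
    (ContinuousLinearMap.norm_compContinuousMultilinearMap_le _ _).trans
      (mul_le_of_le_one_left (norm_nonneg _)
        (ContinuousLinearMap.opNorm_le_bound _ zero_le_one (by simp)))
  have hcard : Fintype.card {s : Finset (Fin (1 + n)) // s.card = n} = n + 1 := by
    rw [Fintype.card_subtype, ← Finset.powerset_univ, ← Finset.powersetCard_eq_filter,
      Finset.card_powersetCard, Finset.card_univ, Fintype.card_fin, add_comm,
      Nat.choose_succ_self_right]
  have hchange := p.nnnorm_changeOriginSeries_le_tsum 1 n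
  rw [tsum_fintype, Finset.sum_const, Finset.card_univ, hcard, add_comm 1 n,
    nsmul_eq_mul] at hchange
  exact hcurry.trans (mod_cast hchange)

theorem inv_le_radius_of_norm_le_pow {p : FormalMultilinearSeries 𝕜 E F} {γ : ℝ≥0}
    (hp : ∀ k, ‖p (k + 2)‖ ≤ γ ^ (k + 1)) : (γ : ℝ≥0∞)⁻¹ ≤ p.radius := by
  refine ENNReal.le_of_forall_nnreal_lt fun r hr => p.le_radius_of_eventually_le r ?_
  have hrγ : (r : ℝ) * γ ≤ 1 := by
    exact_mod_cast ENNReal.le_inv_iff_mul_le.mp hr.le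
  filter_upwards [Filter.eventually_ge_atTop 2] with n hn
  obtain ⟨k, rfl⟩ := Nat.exists_eq_add_of_le' hn
  calc ‖p (k + 2)‖ * r ^ (k + 2) ≤ γ ^ (k + 1) * r ^ (k + 2) := by gcongr; exact hp k
    _ = (r * γ) ^ (k + 1) * r := by ring
    _ ≤ r := mul_le_of_le_one_left r.2 (pow_le_one₀ (by positivity) hrγ)

end FormalMultilinearSeries

section Taylor

variable {𝕜 : Type*} [RCLike 𝕜] {E F : Type*} [NormedAddCommGroup E]
  [NormedSpace 𝕜 E] [NormedAddCommGroup F] [NormedSpace 𝕜 F] [CompleteSpace F]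

variable (𝕜) in
def taylorSeries (f : E → F) (x : E) : FormalMultilinearSeries 𝕜 E F :=
  fun n => (n ! : 𝕜)⁻¹ • iteratedFDeriv 𝕜 n f x

theorem HasFPowerSeriesOnBall.norm_taylorSeries_le {f : E → F} {p : FormalMultilinearSeries 𝕜 E F}
    {x : E} {r : ℝ≥0∞} (hf : HasFPowerSeriesOnBall f p x r) (n : ℕ) :
    ‖taylorSeries 𝕜 f x n‖ ≤ ‖p n‖ := by
  refine ContinuousMultilinearMap.opNorm_le_bound (norm_nonneg _) fun v => ?_
  have hsum : ‖iteratedFDeriv 𝕜 n f x v‖ ≤ n ! * (‖p n‖ * ∏ i, ‖v i‖) := by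
    rw [hf.iteratedFDeriv_eq_sum_of_completeSpace]
    calc _ ≤ ∑ σ : Equiv.Perm (Fin n), ‖p n (fun i => v (σ i))‖ := norm_sum_le _ _
      _ ≤ ∑ σ : Equiv.Perm (Fin n), ‖p n‖ * ∏ i, ‖v i‖ := by
          gcongr with σ
          exact ((p n).le_opNorm _).trans_eq (by rw [Equiv.prod_comp σ (fun i => ‖v i‖)])
      _ = n ! * (‖p n‖ * ∏ i, ‖v i‖) := by simp [Fintype.card_perm]
  have hfact : (0 : ℝ) < n ! := by positivity
  rw [taylorSeries, smul_apply, norm_smul, norm_inv, RCLike.norm_natCast,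
    inv_mul_le_iff₀ hfact]
  exact hsum

theorem HasFPowerSeriesOnBall.taylorSeries {f : E → F} {p : FormalMultilinearSeries 𝕜 E F}
    {x : E} {r : ℝ≥0∞} (hf : HasFPowerSeriesOnBall f p x r) :
    HasFPowerSeriesOnBall f (taylorSeries 𝕜 f x) x r where
  r_le := hf.r_le.trans (FormalMultilinearSeries.radius_le_of_le hf.norm_taylorSeries_le)
  r_pos := hf.r_pos
  hasSum hy := hf.hasSum_iteratedFDeriv hy

end Taylor

section RealAnalytic

variable {E F : Type*} [NormedAddCommGroup E] [NormedSpace ℝ E] [NormedAddCommGroup F]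
  [NormedSpace ℝ F] [CompleteSpace F]

-- The identity theorem on the (connected) ball of convergence.
theorem HasFPowerSeriesAt.hasFPowerSeriesOnBall_radius {f : E → F}
    {p : FormalMultilinearSeries ℝ E F} {x : E} (hp : HasFPowerSeriesAt f p x)
    (hf : AnalyticOnNhd ℝ f (eball x p.radius)) : HasFPowerSeriesOnBall f p x p.radius := by
  obtain ⟨r, hr⟩ := hp
  have hpos : 0 < p.radius := hr.r_pos.trans_le hr.r_le
  have hsum : HasFPowerSeriesOnBall (fun y => p.sum (y - x)) p x p.radius := by
    simpa using (p.hasFPowerSeriesOnBall hpos).comp_sub x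
  have hnear : f =ᶠ[𝓝 x] fun y => p.sum (y - x) := by
    filter_upwards [isOpen_eball.mem_nhds (mem_eball_self hr.r_pos)] with y hy
    have := hr.sum (y := y - x) (by simpa [edist_eq_enorm_sub] using hy)
    rwa [add_sub_cancel] at this
  exact hsum.congr (hf.eqOn_of_preconnected_of_eventuallyEq hsum.analyticOnNhd
    (convex_eball x _).isPreconnected (mem_eball_self hpos) hnear).symm

theorem HasFPowerSeriesOnBall.norm_fderiv_add_sub_le {f : E → F}
    {p : FormalMultilinearSeries ℝ E F} {x z : E} {r : ℝ≥0∞} {γ : ℝ≥0}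
    (hf : HasFPowerSeriesOnBall f p x r) (hp : ∀ k, ‖p (k + 2)‖ ≤ γ ^ (k + 1))
    (hz : z ∈ eball (0 : E) r) (hzγ : ‖z‖ * γ < 1) :
    ‖fderiv ℝ f (x + z) - fderiv ℝ f x‖ ≤ ((1 - ‖z‖ * γ) ^ 2)⁻¹ - 1 := by
  set u := ‖z‖ * γ
  have hu : 0 ≤ u := by positivity
  have hseries : HasSum (fun k => p.derivSeries (k + 1) fun _ => z)
      (fderiv ℝ f (x + z) - fderiv ℝ f x) := by
    simpa [hf.fderiv.coeff_zero] using (hasSum_nat_add_iff' 1).mpr (hf.fderiv.hasSum hz)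
  have hterm : ∀ k : ℕ, ‖p.derivSeries (k + 1) fun _ => z‖ ≤ (k + 2) * u ^ (k + 1) := by
    intro k
    calc ‖p.derivSeries (k + 1) fun _ => z‖ ≤ ‖p.derivSeries (k + 1)‖ * ‖z‖ ^ (k + 1) := by
          simpa using (p.derivSeries (k + 1)).le_opNorm fun _ => z
      _ ≤ ((k + 2) * γ ^ (k + 1)) * ‖z‖ ^ (k + 1) := by
          gcongr
          refine (p.norm_derivSeries_le (k + 1)).trans ?_
          push_cast
          rw [add_assoc, one_add_one_eq_two]
          gcongr
          exact hp k
      _ = (k + 2) * u ^ (k + 1) := by ring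
  -- `∑ (k + 2) u ^ (k + 1)` is `∑ (n + 1) u ^ n = (1 - u)⁻²` without its first term.
  have hmajorant : HasSum (fun k : ℕ => ((k : ℝ) + 2) * u ^ (k + 1)) (((1 - u) ^ 2)⁻¹ - 1) := by
    have h : HasSum (fun n : ℕ => ((n : ℝ) + 1) * u ^ n) ((1 - u) ^ 2)⁻¹ := by
      simpa using hasSum_choose_mul_geometric_of_norm_lt_one 1
        (by rwa [Real.norm_of_nonneg hu] : ‖u‖ < 1)
    simpa [add_assoc, one_add_one_eq_two] using (hasSum_nat_add_iff' 1).mpr h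
  exact hseries.norm_le_of_bounded hmajorant hterm

end RealAnalytic

theorem AnalyticOnNhd.norm_fderiv_add_sub_le {E F : Type*} [NormedAddCommGroup E]
    [NormedSpace ℝ E] [NormedAddCommGroup F] [NormedSpace ℝ F] [CompleteSpace F] {g : E → F}
    (hg : AnalyticOnNhd ℝ g Set.univ) {x z : E} {γ : ℝ≥0}
    (hγ : ∀ k, ‖taylorSeries ℝ g x (k + 2)‖ ≤ γ ^ (k + 1)) (hz : ‖z‖ * γ < 1) :
    ‖fderiv ℝ g (x + z) - fderiv ℝ g x‖ ≤ ((1 - ‖z‖ * γ) ^ 2)⁻¹ - 1 := by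
  obtain ⟨p, r, hp⟩ := hg x trivial
  have hT := hp.taylorSeries.hasFPowerSeriesAt.hasFPowerSeriesOnBall_radius
    (hg.mono (Set.subset_univ _))
  refine hT.norm_fderiv_add_sub_le hγ ?_ hz
  have hzγ : (‖z‖₊ : ℝ≥0∞) < (γ : ℝ≥0∞)⁻¹ := by
    rcases eq_or_ne γ 0 with rfl | hγ0
    · simp
    · rw [← ENNReal.coe_inv hγ0, ENNReal.coe_lt_coe, NNReal.lt_inv_iff_mul_lt hγ0]
      exact_mod_cast hz
  rw [mem_eball_zero_iff, enorm_eq_nnnorm]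
  exact hzγ.trans_le (FormalMultilinearSeries.inv_le_radius_of_norm_le_pow hγ)

section SmaleGamma

open scoped ContDiff

variable {E F : Type*} [NormedAddCommGroup E] [InnerProductSpace ℝ E] [CompleteSpace E]
  [NormedAddCommGroup F] [InnerProductSpace ℝ F] [CompleteSpace F]

theorem norm_taylorSeries_pinv_comp_le {f : E → F} {x : E} (hf : ContDiffAt ℝ ∞ f x) {γ : ℝ≥0}
    (hγ : gammaE f x ≤ γ) (k : ℕ) :
    ‖taylorSeries ℝ (pinv (fderiv ℝ f x) ∘ f) x (k + 2)‖ ≤ γ ^ (k + 1) := by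
  set a := ‖(pinv (fderiv ℝ f x)).compContinuousMultilinearMap (iteratedFDeriv ℝ (k + 2) f x)‖
    / ((k + 2) ! : ℝ)
  have ha : ‖taylorSeries ℝ (pinv (fderiv ℝ f x) ∘ f) x (k + 2)‖ = a := by
    rw [taylorSeries, (pinv _).iteratedFDeriv_comp_left hf (WithTop.coe_le_coe.mpr le_top),
      norm_smul, norm_inv, RCLike.norm_natCast, inv_mul_eq_div]
  have hseq : gammaSeq f x (k + 2) ≤ γ :=
    ENNReal.ofReal_le_coe.mp <| (le_iSup₂ (f := fun k (_ : 2 ≤ k) =>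
      ENNReal.ofReal (gammaSeq f x k)) (k + 2) (by omega)).trans hγ
  have hexp : (1 : ℝ) / (((k + 2 : ℕ) : ℝ) - 1) = ((k + 1 : ℕ) : ℝ)⁻¹ := by
    push_cast; ring
  rw [gammaSeq, hexp] at hseq
  have hpow := (Real.rpow_inv_le_iff_of_pos (by positivity) γ.2 (by positivity)).mp hseq
  rw [ha]
  exact_mod_cast hpow

end SmaleGamma

theorem norm_pinv_comp_fderiv_add_sub_lt_one {E F : Type*} [NormedAddCommGroup E]
    [InnerProductSpace ℝ E] [CompleteSpace E] [NormedAddCommGroup F] [InnerProductSpace ℝ F]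
    [CompleteSpace F] {f : E → F} (hf : AnalyticOnNhd ℝ f Set.univ) {p z : E}
    (hz : ENNReal.ofReal ‖z‖ * gammaE f p < ENNReal.ofReal (1 - √2 / 2)) :
    ‖pinv (fderiv ℝ f p) ∘L fderiv ℝ f (p + z) - pinv (fderiv ℝ f p) ∘L fderiv ℝ f p‖ < 1 := by
  rcases eq_or_ne z 0 with rfl | hz0
  · simp
  have hγ : gammaE f p ≠ ⊤ := by
    rintro h
    simp [h, hz0, ENNReal.mul_top] at hz
  lift gammaE f p to ℝ≥0 using hγ with γ hγeq
  have hu : ‖z‖ * γ < 1 - √2 / 2 := by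
    rwa [← ENNReal.ofReal_coe_nnreal, ← ENNReal.ofReal_mul (norm_nonneg z),
      ENNReal.ofReal_lt_ofReal_iff_of_nonneg (by positivity)] at hz
  set L := pinv (fderiv ℝ f p)
  have hLf : ∀ y, fderiv ℝ (L ∘ f) y = L ∘L fderiv ℝ f y := fun y => by
    rw [fderiv_comp y L.differentiableAt (hf y trivial).differentiableAt, L.fderiv]
  have hbound := (L.comp_analyticOnNhd hf).norm_fderiv_add_sub_le
    (norm_taylorSeries_pinv_comp_le hf.contDiff.contDiffAt hγeq.ge)
    (hu.trans_le (by linarith [Real.sqrt_nonneg 2]))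
  rw [hLf, hLf] at hbound
  -- The constant `1 - √2 / 2` is exactly what makes `(1 - ‖z‖γ)² > 1 / 2`.
  have hsq : 2⁻¹ < (1 - ‖z‖ * γ) ^ 2 := by
    nlinarith [Real.sq_sqrt (show (0 : ℝ) ≤ 2 by norm_num), Real.sqrt_nonneg 2,
      mul_nonneg (norm_nonneg z) γ.2]
  have hinv : ((1 - ‖z‖ * γ) ^ 2)⁻¹ < 2 := inv_lt_of_inv_lt₀ two_pos hsq
  linarith

theorem statement15_general {n m : ℕ}
    (f : EuclideanSpace ℝ (Fin (n + 1)) → EuclideanSpace ℝ (Fin m))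
    (hf : AnalyticOnNhd ℝ f Set.univ)
    (p : EuclideanSpace ℝ (Fin (n + 1)))
    (hsurj : Surjective ⇑(fderiv ℝ f p))
    (H₂ : Submodule ℝ (EuclideanSpace ℝ (Fin (n + 1))))
    (hH₂ : H₂ = (LinearMap.ker (fderiv ℝ f p).toLinearMap)ᗮ)
    (z : EuclideanSpace ℝ (Fin (n + 1)))
    (hz : ENNReal.ofReal ‖z‖ * gammaE f p < ENNReal.ofReal (1 - Real.sqrt 2 / 2)) :
    Bijective (fun v : H₂ => fderiv ℝ f (p + z) (v : EuclideanSpace ℝ (Fin (n + 1)))) := by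
  subst hH₂
  exact bijective_restrict_orthogonal_ker_of_norm_pinv_comp_sub_lt_one hsurj
    (norm_pinv_comp_fderiv_add_sub_lt_one hf hz)

/-- (Claim 1 in the proof of Proposition `M2`.) If ‖z‖·γ(f,p) < 1 − √2/2,
then the restriction of Df(p+z) to H₂ = (ker Df(p))^⊥ is a linear isomorphism onto ℝ^m. -/
theorem statement15 {n m : ℕ} (hm : m ≤ n + 1)
    (f : EuclideanSpace ℝ (Fin (n + 1)) → EuclideanSpace ℝ (Fin m))
    (hf : AnalyticOnNhd ℝ f Set.univ)
    (p : EuclideanSpace ℝ (Fin (n + 1)))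
    (hsurj : Surjective ⇑(fderiv ℝ f p))
    (H₂ : Submodule ℝ (EuclideanSpace ℝ (Fin (n + 1))))
    (hH₂ : H₂ = (LinearMap.ker (fderiv ℝ f p).toLinearMap)ᗮ)
    (z : EuclideanSpace ℝ (Fin (n + 1)))
    (hz : ENNReal.ofReal ‖z‖ * gammaE f p < ENNReal.ofReal (1 - Real.sqrt 2 / 2)) :
    Bijective (fun v : H₂ => fderiv ℝ f (p + z) (v : EuclideanSpace ℝ (Fin (n + 1)))) :=
  statement15_general f hf p hsurj H₂ hH₂ z hz
end
end

section
/- Let ℝ^{n+1} = H₁ ⊕ H₃ be an orthogonal direct sum decomposition, let φ : H₁ → H₃ be a linear map, and let E := {x + φ(x) : x ∈ H₁} be its graph. Then: (i) E^⊥ = {−φ*(v) + v : v ∈ H₃}, where φ* : H₃ → H₁ is the adjoint of φ; (ii) if φ ≠ 0, p, u ∈ H₃, x ∈ H₁, and w ∈ H₃ ∩ ((p + x + u) + E^⊥), then ‖w − p‖ ≥ ‖x‖/‖φ‖ − ‖u‖, where ‖φ‖ is the operator norm. -/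
/-!
Split `e = y + z` with `y ∈ K = H₁`, `z ∈ Kᗮ = H₃`. For `a ∈ K` the cross terms vanish and
`⟪a + φ a, y + z⟫ = ⟪a, y + φ† z⟫`, so `e` is orthogonal to the graph of `φ` exactly when
`y = -φ† z`. In (ii), `w - p - x - u ∈ Eᗮ` has `K`-component `-x` and `Kᗮ`-component
`v = w - p - u`, hence `x = φ† v` and `‖x‖ ≤ ‖φ‖ ‖w - p - u‖ ≤ ‖φ‖ (‖w - p‖ + ‖u‖)`.
-/

open scoped RealInnerProductSpace
open ContinuousLinearMap Submodule

variable {F : Type*} [NormedAddCommGroup F] [InnerProductSpace ℝ F] {K : Submodule ℝ F}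

noncomputable def graphSubmodule (φ : K →L[ℝ] Kᗮ) : Submodule ℝ F :=
  LinearMap.range ((K.subtypeL + Kᗮ.subtypeL.comp φ : K →L[ℝ] F) : K →ₗ[ℝ] F)

variable [CompleteSpace K] [CompleteSpace Kᗮ] (φ : K →L[ℝ] Kᗮ)

theorem inner_coe_adjoint (a : K) (v : Kᗮ) : ⟪(a : F), (adjoint φ v : F)⟫ = ⟪(φ a : F), (v : F)⟫ :=
  adjoint_inner_right φ a v

theorem inner_graph_add (a : K) {y z : F} (hy : y ∈ K) (hz : z ∈ Kᗮ) :
    ⟪(a : F) + φ a, y + z⟫ = ⟪(a : F), y + adjoint φ ⟨z, hz⟩⟫ := by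
  rw [inner_add_right, inner_add_left, inner_add_left, inner_add_right, inner_coe_adjoint,
    inner_right_of_mem_orthogonal a.2 hz, inner_left_of_mem_orthogonal hy (φ a).2]
  ring

theorem mem_orthogonal_graphSubmodule_iff (e : F) :
    e ∈ (graphSubmodule φ)ᗮ ↔ ∃ v : Kᗮ, e = v - adjoint φ v := by
  constructor
  · intro he
    obtain ⟨y, hy, z, hz, rfl⟩ := K.exists_add_mem_mem_orthogonal e
    have hs : y + (adjoint φ ⟨z, hz⟩ : F) ∈ K := K.add_mem hy (adjoint φ ⟨z, hz⟩).2
    have hy' : y = -(adjoint φ ⟨z, hz⟩ : F) := by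
      rw [← add_eq_zero_iff_eq_neg, ← inner_self_eq_zero (𝕜 := ℝ)]
      simpa [inner_graph_add φ ⟨_, hs⟩ hy hz] using he _ ⟨⟨_, hs⟩, rfl⟩
    refine ⟨⟨z, hz⟩, ?_⟩
    rw [hy']; abel
  · rintro ⟨v, rfl⟩ _ ⟨a, rfl⟩
    simp only [ContinuousLinearMap.coe_coe, add_apply, coe_subtypeL, coe_subtype, comp_apply]
    rw [inner_add_left, inner_sub_right, inner_sub_right, inner_coe_adjoint,
      inner_right_of_mem_orthogonal a.2 v.2, inner_left_of_mem_orthogonal (adjoint φ v).2 (φ a).2]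
    ring

theorem norm_le_opNorm_mul_norm_of_add_mem_orthogonal_graphSubmodule {x z : F} (hx : x ∈ K)
    (hz : z ∈ Kᗮ) (h : x + z ∈ (graphSubmodule φ)ᗮ) : ‖x‖ ≤ ‖φ‖ * ‖z‖ := by
  obtain ⟨v, hv⟩ := (mem_orthogonal_graphSubmodule_iff φ _).1 h
  -- `x + adjoint φ v = v - z` lies in `K ⊓ Kᗮ = ⊥`
  have h0 : x + (adjoint φ v : F) = 0 := by
    refine disjoint_def.1 K.orthogonal_disjoint _ (K.add_mem hx (adjoint φ v).2) ?_
    rw [show x + (adjoint φ v : F) = v - z by rw [← sub_eq_zero, ← sub_eq_zero.2 hv]; abel]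
    exact Kᗮ.sub_mem v.2 hz
  have hx_eq : x = -(adjoint φ v : F) := eq_neg_of_add_eq_zero_left h0
  have hzv : z = v := by
    calc z = (x + z) - x := by abel
      _ = v := by rw [hv, hx_eq]; abel
  calc ‖x‖ = ‖adjoint φ v‖ := by rw [hx_eq, norm_neg, coe_norm]
    _ ≤ ‖adjoint φ‖ * ‖v‖ := (adjoint φ).le_opNorm v
    _ = ‖φ‖ * ‖z‖ := by rw [LinearIsometryEquiv.norm_map, hzv, coe_norm]

/-- (Lemma `M4`.) For the graph E of a linear map φ : H₁ → H₃ (where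
ℝ^{n+1} = H₁ ⊥ H₃): (i) E^⊥ = {−φ*(v) + v : v ∈ H₃}; (ii) if φ ≠ 0, p, u ∈ H₃, x ∈ H₁ and
w ∈ H₃ ∩ ((p + x + u) + E^⊥), then ‖w − p‖ ≥ ‖x‖/‖φ‖ − ‖u‖. -/
theorem statement18 {n : ℕ} (H₁ H₃ : Submodule ℝ (EuclideanSpace ℝ (Fin (n + 1))))
    (hH₃ : H₃ = H₁ᗮ)
    (φ : H₁ →L[ℝ] H₃)
    (E : Submodule ℝ (EuclideanSpace ℝ (Fin (n + 1))))
    (hE : E = LinearMap.range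
      (((H₁.subtypeL + H₃.subtypeL.comp φ) : H₁ →L[ℝ] EuclideanSpace ℝ (Fin (n + 1))) :
        H₁ →ₗ[ℝ] EuclideanSpace ℝ (Fin (n + 1)))) :
    (Eᗮ : Set (EuclideanSpace ℝ (Fin (n + 1)))) =
      {u | ∃ v : H₃, u = (v : EuclideanSpace ℝ (Fin (n + 1)))
        - ((ContinuousLinearMap.adjoint φ) v : EuclideanSpace ℝ (Fin (n + 1)))} ∧
    (φ ≠ 0 → ∀ p u x w : EuclideanSpace ℝ (Fin (n + 1)),
      p ∈ H₃ → u ∈ H₃ → x ∈ H₁ → w ∈ H₃ →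
      (∃ e ∈ Eᗮ, w = p + x + u + e) →
      ‖x‖ / ‖φ‖ - ‖u‖ ≤ ‖w - p‖) := by
  subst hH₃ hE
  refine ⟨Set.ext (mem_orthogonal_graphSubmodule_iff φ), ?_⟩
  rintro - p u x w hp hu hx hw ⟨e, he, hwe⟩
  have he' : -x + (w - p - u) = e := by rw [hwe]; abel
  have hx' : ‖x‖ ≤ ‖w - p - u‖ * ‖φ‖ := by
    have h := norm_le_opNorm_mul_norm_of_add_mem_orthogonal_graphSubmodule φ (H₁.neg_mem hx)
      (sub_mem (sub_mem hw hp) hu) (he' ▸ he)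
    rwa [norm_neg, mul_comm] at h
  have := div_le_of_le_mul₀ (norm_nonneg φ) (norm_nonneg _) hx'
  linarith [norm_sub_le (w - p) u]
end
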